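/- Let X be a linear subspace of the space of (a.e.-equivalence classes of) real-valued measurable functions on [0,∞) with Lebesgue measure λ, equipped with a norm ‖·‖ satisfying: (i) if g ∈ X and f is measurable with |f| ≤ |g| a.e., then f ∈ X and ‖f‖ ≤ ‖g‖; and (ii) if f ∈ X and g is measurable and equimeasurable with f (i.e. λ{t : |f(t)| > s} = λ{t : |g(t)| > s} for all s > 0), then g ∈ X and ‖g‖ = ‖f‖. Let 1 < q < ∞ and C > 0, and suppose that every sequence {f_n} in X with ‖f_n‖ = 1 and f_i · f_j = 0 a.e. for i ≠ j has a subsequence {f_{n_k}} with C (Σ_{k=1}^m |a_k|^q)^{1/q} ≤ ‖Σ_{k=1}^m a_k f_{n_k}‖ for all scalars a_1,…,a_m and all m. Then for every step function f = Σ_{i=1}^m λ_i χ_{[u_{i−1},u_i)} in X with 0 = u_0 < u_1 < ⋯ < u_m < ∞ and every real s ≥ 1, the dilated function D_s f defined by (D_s f)(t) = f(t/s) belongs to X and satisfies ‖D_s f‖ ≥ 2^{−1/q} C s^{1/q} ‖f‖. -/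

import Mathlib

open MeasureTheory Finset

/-- Lebesgue measure on `[0,∞)`. -/
noncomputable def muHalfLine : Measure ℝ := volume.restrict (Set.Ici (0 : ℝ))

/-! Let `f` be supported in `[0, L)`. Its translates `f (· - j L)` are pairwise disjoint and
equimeasurable with `f`, and a sum of `n` of them has `n` times the distribution function of `f`,
just like the dilation `D_n f`. Applying the `UDT_q` estimate with all coefficients `1` to the
normalised translates therefore gives `C n^{1/q} ‖f‖ ≤ ‖D_n f‖`. For a step function and
`s ≤ s'`, `D_s f` is equimeasurable with the function obtained from `D_{s'} f` by keeping the
first `s / s'` of each of its steps, so `‖D_s f‖ ≤ ‖D_{s'} f‖`; taking `s' = ⌊s⌋ + 1` puts `D_s f`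
in `X`, and `n = ⌊s⌋ ≥ s / 2` finishes the proof. -/

open Function
open scoped ENNReal

noncomputable def distribution (f : ℝ → ℝ) (r : ℝ) : ℝ≥0∞ := muHalfLine {t | r < |f t|}

noncomputable def dilation (s : ℝ) (f : ℝ → ℝ) : ℝ → ℝ := fun t => f (t / s)

noncomputable def stepFunction {ι : Type*} (A : Finset ι) (a b v : ι → ℝ) (t : ℝ) : ℝ :=
  ∑ i ∈ A, v i * (Set.Ico (a i) (b i)).indicator 1 t

def IsIdealNorm (Mem : (ℝ → ℝ) → Prop) (Nrm : (ℝ → ℝ) → ℝ) : Prop :=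
  ∀ f g : ℝ → ℝ, Measurable f → Mem g → (∀ᵐ t ∂muHalfLine, |f t| ≤ |g t|) →
    Mem f ∧ Nrm f ≤ Nrm g

def IsRearrangementInvariant (Mem : (ℝ → ℝ) → Prop) (Nrm : (ℝ → ℝ) → ℝ) : Prop :=
  ∀ f g : ℝ → ℝ, Mem f → Measurable g → (∀ r : ℝ, 0 < r → distribution f r = distribution g r) →
    Mem g ∧ Nrm g = Nrm f

def HasUDT (Mem : (ℝ → ℝ) → Prop) (Nrm : (ℝ → ℝ) → ℝ) (q C : ℝ) : Prop :=
  ∀ f : ℕ → ℝ → ℝ, (∀ n, Mem (f n)) → (∀ n, Nrm (f n) = 1) →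
    (∀ i j, i ≠ j → ∀ᵐ t ∂muHalfLine, f i t * f j t = 0) →
    ∃ φ : ℕ → ℕ, StrictMono φ ∧ ∀ (m : ℕ) (a : ℕ → ℝ),
      C * (∑ k ∈ range m, |a k| ^ q) ^ (1 / q) ≤ Nrm (fun t => ∑ k ∈ range m, a k * f (φ k) t)

section Distribution

lemma muHalfLine_apply_of_subset {S : Set ℝ} (hS : S ⊆ Set.Ici 0) : muHalfLine S = volume S := by
  rw [muHalfLine, Measure.restrict_apply' measurableSet_Ici, Set.inter_eq_left.mpr hS]

lemma mem_support_of_lt_abs {f : ℝ → ℝ} {r t : ℝ} (hr : 0 ≤ r) (h : r < |f t|) :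
    t ∈ support f :=
  abs_pos.mp (hr.trans_lt h)

lemma distribution_dilation (f : ℝ → ℝ) {s : ℝ} (hs : 0 < s) (r : ℝ) :
    distribution (dilation s f) r = ENNReal.ofReal s * distribution f r := by
  have hpre : {t | r < |dilation s f t|} ∩ Set.Ici 0
      = (s⁻¹ * ·) ⁻¹' ({t | r < |f t|} ∩ Set.Ici 0) := by
    ext t
    simp [dilation, div_eq_inv_mul, inv_pos.mpr hs]
  rw [distribution, distribution, muHalfLine, Measure.restrict_apply' measurableSet_Ici,
    Measure.restrict_apply' measurableSet_Ici, hpre,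
    Real.volume_preimage_mul_left (inv_ne_zero hs.ne'), inv_inv, abs_of_pos hs]

lemma measurable_dilation {f : ℝ → ℝ} (hf : Measurable f) (s : ℝ) : Measurable (dilation s f) :=
  hf.comp (measurable_id.div_const s)

lemma distribution_translate {f : ℝ → ℝ} (hf : support f ⊆ Set.Ici 0) {c r : ℝ} (hc : 0 ≤ c)
    (hr : 0 ≤ r) : distribution (fun t => f (t - c)) r = distribution f r := by
  have hsub : {t | r < |f (t - c)|} ⊆ Set.Ici 0 := fun t ht =>
    le_trans hc (sub_nonneg.mp (hf (mem_support_of_lt_abs hr ht)))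
  rw [distribution, distribution, muHalfLine_apply_of_subset hsub,
    muHalfLine_apply_of_subset (S := {t | r < |f t|}) fun t ht => hf (mem_support_of_lt_abs hr ht),
    ← measure_preimage_add_right volume (-c) {t | r < |f t|}]
  rfl

lemma sum_apply_eq_of_mem_support {ι : Type*} {A : Finset ι} {g : ι → ℝ → ℝ}
    (hd : (A : Set ι).PairwiseDisjoint fun i => support (g i)) {i : ι} (hi : i ∈ A) {t : ℝ}
    (ht : t ∈ support (g i)) : ∑ j ∈ A, g j t = g i t :=
  Finset.sum_eq_single_of_mem i hi fun _ hj hji =>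
    notMem_support.mp (Set.disjoint_left.mp (hd hi hj hji.symm) ht)

lemma distribution_sum_of_pairwiseDisjoint {ι : Type*} {A : Finset ι} {g : ι → ℝ → ℝ}
    (hg : ∀ i ∈ A, Measurable (g i)) (hd : (A : Set ι).PairwiseDisjoint fun i => support (g i))
    {r : ℝ} (hr : 0 ≤ r) :
    distribution (fun t => ∑ i ∈ A, g i t) r = ∑ i ∈ A, distribution (g i) r := by
  have hset : {t | r < |∑ i ∈ A, g i t|} = ⋃ i ∈ A, {t | r < |g i t|} := by
    ext t
    simp only [Set.mem_ofPred_eq, Set.mem_iUnion, exists_prop]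
    constructor
    · intro ht
      obtain ⟨i, hi, hti⟩ := Finset.exists_ne_zero_of_sum_ne_zero
        (mem_support_of_lt_abs (f := fun t => ∑ i ∈ A, g i t) hr ht)
      exact ⟨i, hi, sum_apply_eq_of_mem_support hd hi hti ▸ ht⟩
    · rintro ⟨i, hi, ht⟩
      rwa [sum_apply_eq_of_mem_support hd hi (mem_support_of_lt_abs hr ht)]
  rw [distribution, hset, measure_biUnion_finset (f := fun i => {t | r < |g i t|})
    (hd.mono_on fun i _ t ht => mem_support_of_lt_abs hr ht)
    fun i hi => measurableSet_lt measurable_const (hg i hi).abs]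
  rfl

end Distribution

section StepFunction

variable {ι : Type*} {A : Finset ι} {a b v : ι → ℝ}

lemma measurable_stepFunction : Measurable (stepFunction A a b v) :=
  Finset.measurable_sum _ fun _ _ =>
    (measurable_const.indicator measurableSet_Ico).const_mul _

lemma support_stepFunction_subset :
    support (stepFunction A a b v) ⊆ ⋃ i ∈ A, Set.Ico (a i) (b i) := by
  intro t ht
  obtain ⟨i, hi, hti⟩ := Finset.exists_ne_zero_of_sum_ne_zero ht
  exact Set.mem_biUnion hi (Set.mem_of_indicator_ne_zero (right_ne_zero_of_mul hti))

lemma stepFunction_dilation {s : ℝ} (hs : 0 < s) :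
    dilation s (stepFunction A a b v) = stepFunction A (fun i => s * a i) (fun i => s * b i) v := by
  funext t
  refine Finset.sum_congr rfl fun i _ => ?_
  congr 1
  simp only [Set.indicator_apply, Set.mem_Ico, le_div_iff₀' hs, div_lt_iff₀' hs, Pi.one_apply]

lemma stepFunction_apply_of_mem (hd : (A : Set ι).PairwiseDisjoint fun i => Set.Ico (a i) (b i))
    {i : ι} (hi : i ∈ A) {t : ℝ} (ht : t ∈ Set.Ico (a i) (b i)) : stepFunction A a b v t = v i := by
  rw [stepFunction, Finset.sum_eq_single_of_mem i hi, Set.indicator_of_mem ht, Pi.one_apply,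
    mul_one]
  intro j hj hji
  rw [Set.indicator_of_notMem (Set.disjoint_left.mp (hd hi hj hji.symm) ht), mul_zero]

lemma distribution_mul_indicator_Ico {a b c r : ℝ} (ha : 0 ≤ a) (hr : 0 ≤ r) :
    distribution (fun t => c * (Set.Ico a b).indicator 1 t) r
      = if r < |c| then ENNReal.ofReal (b - a) else 0 := by
  split_ifs with hc
  · have hset : {t | r < |c * (Set.Ico a b).indicator 1 t|} = Set.Ico a b := by
      ext t
      by_cases ht : t ∈ Set.Ico a b <;> simp [ht, hc, hr.not_gt]
    rw [distribution, hset, muHalfLine_apply_of_subset fun t ht => ha.trans ht.1,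
      Real.volume_Ico]
  · have hset : {t | r < |c * (Set.Ico a b).indicator 1 t|} = ∅ := by
      ext t
      by_cases ht : t ∈ Set.Ico a b <;> simp [ht, hc, hr.not_gt]
    rw [distribution, hset, measure_empty]

lemma distribution_stepFunction (hd : (A : Set ι).PairwiseDisjoint fun i => Set.Ico (a i) (b i))
    (ha : ∀ i ∈ A, 0 ≤ a i) {r : ℝ} (hr : 0 ≤ r) :
    distribution (stepFunction A a b v) r
      = ∑ i ∈ A with r < |v i|, ENNReal.ofReal (b i - a i) := by
  rw [Finset.sum_filter]
  refine (distribution_sum_of_pairwiseDisjoint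
    (g := fun i t => v i * (Set.Ico (a i) (b i)).indicator 1 t)
    (fun i _ => (measurable_const.indicator measurableSet_Ico).const_mul _)
    (hd.mono_on fun i _ t ht => Set.mem_of_indicator_ne_zero (right_ne_zero_of_mul ht))
    hr).trans ?_
  exact Finset.sum_congr rfl fun i hi => distribution_mul_indicator_Ico (ha i hi) hr

lemma abs_stepFunction_le_of_le {b' : ι → ℝ}
    (hd : (A : Set ι).PairwiseDisjoint fun i => Set.Ico (a i) (b i)) (hb : ∀ i ∈ A, b' i ≤ b i)
    (t : ℝ) : |stepFunction A a b' v t| ≤ |stepFunction A a b v t| := by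
  have hsub : ∀ i ∈ A, Set.Ico (a i) (b' i) ⊆ Set.Ico (a i) (b i) :=
    fun i hi => Set.Ico_subset_Ico_right (hb i hi)
  by_cases ht : t ∈ support (stepFunction A a b' v)
  · obtain ⟨i, hi, hti⟩ := Set.mem_iUnion₂.mp (support_stepFunction_subset ht)
    rw [stepFunction_apply_of_mem (hd.mono_on hsub) hi hti,
      stepFunction_apply_of_mem hd hi (hsub i hi hti)]
  · rw [notMem_support.mp ht, abs_zero]
    exact abs_nonneg _

end StepFunction

section Partition

variable {m : ℕ} {u : ℕ → ℝ}

lemma pairwiseDisjoint_Ico_of_monotoneOn (hu : MonotoneOn u (Set.Iic m)) :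
    ((range m : Finset ℕ) : Set ℕ).PairwiseDisjoint fun i => Set.Ico (u i) (u (i + 1)) := by
  have key : ∀ i j, i < j → j < m →
      Disjoint (Set.Ico (u i) (u (i + 1))) (Set.Ico (u j) (u (j + 1))) := fun i j hij hj =>
    Set.Ico_disjoint_Ico_same.mono_right <| Set.Ico_subset_Ico_left <|
      hu (Set.mem_Iic.mpr (by omega)) (Set.mem_Iic.mpr hj.le) hij
  intro i hi j hj hij
  rw [coe_range, Set.mem_Iio] at hi hj
  rcases hij.lt_or_gt with h | h
  · exact key i j h hj
  · exact (key j i h hi).symm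

lemma support_stepFunction_subset_Ico (hu : MonotoneOn u (Set.Iic m)) (v : ℕ → ℝ) :
    support (stepFunction (range m) u (fun i => u (i + 1)) v) ⊆ Set.Ico (u 0) (u m) := by
  intro t ht
  obtain ⟨i, hi, hti⟩ := Set.mem_iUnion₂.mp (support_stepFunction_subset ht)
  rw [mem_range] at hi
  exact ⟨(hu (Set.mem_Iic.mpr (Nat.zero_le m)) (Set.mem_Iic.mpr hi.le) (Nat.zero_le i)).trans
    hti.1, hti.2.trans_le (hu (Set.mem_Iic.mpr hi) (Set.mem_Iic.mpr le_rfl) hi)⟩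

end Partition

lemma pairwise_disjoint_support_translate {f : ℝ → ℝ} {L : ℝ} (hf : support f ⊆ Set.Ico 0 L) :
    Pairwise (Disjoint on fun j : ℕ => support fun t => f (t - j * L)) := by
  refine (pairwise_disjoint_on _).mpr fun i j hij => Set.disjoint_left.mpr fun t hti htj => ?_
  have hi := hf hti
  have hj := hf htj
  have hij' : (i : ℝ) + 1 ≤ j := by exact_mod_cast hij
  simp only [Set.mem_Ico] at hi hj
  nlinarith

lemma distribution_sum_translate {f : ℝ → ℝ} (hf : Measurable f) {L : ℝ} (hL : 0 ≤ L)
    (hsupp : support f ⊆ Set.Ico 0 L) {ψ : ℕ → ℕ} (hψ : Injective ψ) (n : ℕ) {r : ℝ}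
    (hr : 0 ≤ r) :
    distribution (fun t => ∑ k ∈ range n, f (t - ψ k * L)) r = n * distribution f r := by
  rw [distribution_sum_of_pairwiseDisjoint (g := fun k t => f (t - ψ k * L))
      (fun k _ => hf.comp (measurable_sub_const _))
      (fun k _ l _ hkl => pairwise_disjoint_support_translate hsupp (hψ.ne hkl)) hr,
    Finset.sum_congr rfl fun k _ =>
      distribution_translate (hsupp.trans Set.Ico_subset_Ici_self) (by positivity) hr,
    sum_const, card_range, nsmul_eq_mul]

section FunctionSpace

variable {Mem : (ℝ → ℝ) → Prop} {Nrm : (ℝ → ℝ) → ℝ}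

lemma mem_sum (hMzero : Mem 0) (hMadd : ∀ f g : ℝ → ℝ, Mem f → Mem g → Mem (f + g))
    {ι : Type*} {A : Finset ι} {g : ι → ℝ → ℝ} (hg : ∀ i ∈ A, Mem (g i)) :
    Mem fun t => ∑ i ∈ A, g i t := by
  rw [← Finset.sum_fn]
  exact Finset.sum_induction g Mem hMadd hMzero hg

lemma mem_translate (hri : IsRearrangementInvariant Mem Nrm) {f : ℝ → ℝ} (hMem : Mem f)
    (hf : Measurable f) (hsupp : support f ⊆ Set.Ici 0) {c : ℝ} (hc : 0 ≤ c) :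
    Mem (fun t => f (t - c)) ∧ Nrm (fun t => f (t - c)) = Nrm f :=
  hri f _ hMem (hf.comp (measurable_sub_const c)) fun _ hr =>
    (distribution_translate hsupp hc hr.le).symm

lemma mem_dilation_nat (hri : IsRearrangementInvariant Mem Nrm) {f : ℝ → ℝ} (hf : Measurable f)
    {L : ℝ} (hL : 0 ≤ L) (hsupp : support f ⊆ Set.Ico 0 L) {ψ : ℕ → ℕ} (hψ : Injective ψ)
    {n : ℕ} (hn : 0 < n) (hmem : Mem fun t => ∑ k ∈ range n, f (t - ψ k * L)) :
    Mem (dilation n f) ∧ Nrm (dilation n f) = Nrm fun t => ∑ k ∈ range n, f (t - ψ k * L) :=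
  hri _ _ hmem (measurable_dilation hf n) fun r hr => by
    rw [distribution_sum_translate hf hL hsupp hψ n hr.le, distribution_dilation f (by positivity),
      ENNReal.ofReal_natCast]

lemma exists_strictMono_lower_estimate {q C : ℝ} (hMzero : Mem 0)
    (hMadd : ∀ f g : ℝ → ℝ, Mem f → Mem g → Mem (f + g))
    (hMsmul : ∀ (c : ℝ) (f : ℝ → ℝ), Mem f → Mem (c • f))
    (hNhom : ∀ (c : ℝ) (f : ℝ → ℝ), Mem f → Nrm (c • f) = |c| * Nrm f)
    (hUDT : HasUDT Mem Nrm q C) {g : ℕ → ℝ → ℝ} {N : ℝ} (hN : 0 < N) (hg : ∀ j, Mem (g j))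
    (hgN : ∀ j, Nrm (g j) = N) (hdisj : Pairwise (Disjoint on fun j => support (g j))) :
    ∃ φ : ℕ → ℕ, StrictMono φ ∧
      ∀ n : ℕ, C * (n : ℝ) ^ (1 / q) * N ≤ Nrm fun t => ∑ k ∈ range n, g (φ k) t := by
  have hN' : |N⁻¹| = N⁻¹ := abs_of_pos (inv_pos.mpr hN)
  obtain ⟨φ, hφ, hest⟩ := hUDT (fun j => N⁻¹ • g j) (fun j => hMsmul _ _ (hg j))
    (fun j => by rw [hNhom _ _ (hg j), hgN, hN', inv_mul_cancel₀ hN.ne'])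
    (fun i j hij => ae_of_all _ fun t => by
      by_cases hi : g i t = 0
      · simp [hi]
      · simp [notMem_support.mp (Set.disjoint_left.mp (hdisj hij) hi)])
  refine ⟨φ, hφ, fun n => ?_⟩
  have hsum : (fun t => ∑ k ∈ range n, (1 : ℝ) * (N⁻¹ • g (φ k)) t)
      = N⁻¹ • fun t => ∑ k ∈ range n, g (φ k) t := by
    funext t
    simp [Finset.mul_sum]
  have h := hest n fun _ => 1
  rw [hsum, hNhom _ _ (mem_sum hMzero hMadd fun k _ => hg (φ k)), hN'] at h
  simp only [abs_one, Real.one_rpow, sum_const, card_range, nsmul_eq_mul, mul_one] at h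
  rwa [← le_inv_mul_iff₀' hN]

lemma dilation_stepFunction_mono (hri : IsRearrangementInvariant Mem Nrm)
    (hideal : IsIdealNorm Mem Nrm) {m : ℕ} {u v : ℕ → ℝ} (hu : MonotoneOn u (Set.Iic m))
    (hu0 : 0 ≤ u 0) {s s' : ℝ} (hs : 0 < s) (hss' : s ≤ s')
    (hmem : Mem (dilation s' (stepFunction (range m) u (fun i => u (i + 1)) v))) :
    Mem (dilation s (stepFunction (range m) u (fun i => u (i + 1)) v)) ∧
      Nrm (dilation s (stepFunction (range m) u (fun i => u (i + 1)) v))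
        ≤ Nrm (dilation s' (stepFunction (range m) u (fun i => u (i + 1)) v)) := by
  have hs' : 0 < s' := hs.trans_le hss'
  have hmono : ∀ i ∈ range m, 0 ≤ u i ∧ u i ≤ u (i + 1) := fun i hi => by
    rw [mem_range] at hi
    exact ⟨hu0.trans (hu (Set.mem_Iic.mpr (Nat.zero_le m)) (Set.mem_Iic.mpr hi.le) (Nat.zero_le i)),
      hu (Set.mem_Iic.mpr hi.le) (Set.mem_Iic.mpr hi) (Nat.le_succ i)⟩
  have hdisj : ∀ c, 0 < c →
      (range m : Set ℕ).PairwiseDisjoint fun i => Set.Ico (c * u i) (c * u (i + 1)) :=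
    fun c hc => pairwiseDisjoint_Ico_of_monotoneOn (u := fun i => c * u i)
      fun i hi j hj hij => mul_le_mul_of_nonneg_left (hu hi hj hij) hc.le
  have hlen : ∀ i ∈ range m, s' * u i + s * (u (i + 1) - u i) ≤ s' * u (i + 1) := fun i hi => by
    nlinarith [hmono i hi]
  -- the first `s / s'` of each block of `D_{s'} f`, which is equimeasurable with `D_s f`
  set g := stepFunction (range m) (fun i => s' * u i) (fun i => s' * u i + s * (u (i + 1) - u i)) v
  obtain ⟨hg, hg_le⟩ := hideal g _ measurable_stepFunction hmem <| ae_of_all _ fun t => by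
    rw [stepFunction_dilation hs']
    exact abs_stepFunction_le_of_le (hdisj s' hs') hlen t
  obtain ⟨hmem_s, hnrm_s⟩ := hri g _ hg (measurable_dilation measurable_stepFunction s)
    fun r hr => by
      rw [stepFunction_dilation hs,
        distribution_stepFunction (hdisj s hs) (fun i hi => by nlinarith [hmono i hi]) hr.le,
        distribution_stepFunction
          ((hdisj s' hs').mono_on fun i hi => Set.Ico_subset_Ico_right (hlen i hi))
          (fun i hi => by nlinarith [hmono i hi]) hr.le]
      exact Finset.sum_congr rfl fun i _ => by ring_nf
  exact ⟨hmem_s, hnrm_s.trans_le hg_le⟩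

end FunctionSpace

lemma two_rpow_neg_mul_rpow_le_floor_rpow {s p : ℝ} (hs : 1 ≤ s) (hp : 0 ≤ p) :
    2 ^ (-p) * s ^ p ≤ (⌊s⌋₊ : ℝ) ^ p := by
  have hn : (1 : ℝ) ≤ ⌊s⌋₊ := by exact_mod_cast Nat.floor_pos.mpr hs
  rw [Real.rpow_neg zero_le_two, inv_mul_eq_div, ← Real.div_rpow (by linarith) zero_le_two]
  exact Real.rpow_le_rpow (by linarith) (by linarith [Nat.lt_floor_add_one s]) hp

theorem statement17_general
    (Mem : (ℝ → ℝ) → Prop) (Nrm : (ℝ → ℝ) → ℝ)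
    -- `X` is a linear subspace:
    (hMzero : Mem 0)
    (hMadd : ∀ f g : ℝ → ℝ, Mem f → Mem g → Mem (f + g))
    (hMsmul : ∀ (c : ℝ) (f : ℝ → ℝ), Mem f → Mem (c • f))
    -- `Nrm` is a norm on it:
    (hNnonneg : ∀ f : ℝ → ℝ, 0 ≤ Nrm f)
    (hNhom : ∀ (c : ℝ) (f : ℝ → ℝ), Mem f → Nrm (c • f) = |c| * Nrm f)
    -- (i) the norm is an ideal (lattice) norm:
    (hideal : ∀ f g : ℝ → ℝ, Measurable f → Mem g → (∀ᵐ t ∂muHalfLine, |f t| ≤ |g t|) →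
      Mem f ∧ Nrm f ≤ Nrm g)
    -- (ii) the norm is rearrangement invariant:
    (hri : ∀ f g : ℝ → ℝ, Mem f → Measurable g →
      (∀ s : ℝ, 0 < s →
        muHalfLine {t | s < |f t|} = muHalfLine {t | s < |g t|}) →
      Mem g ∧ Nrm g = Nrm f)
    (q C : ℝ) (hq : 1 < q) (hC : 0 < C)
    -- the `UDT_q`-property with constant `C`:
    (hUDT : ∀ f : ℕ → ℝ → ℝ, (∀ n, Mem (f n)) → (∀ n, Nrm (f n) = 1) →
      (∀ i j, i ≠ j → ∀ᵐ t ∂muHalfLine, f i t * f j t = 0) →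
      ∃ φ : ℕ → ℕ, StrictMono φ ∧ ∀ (m : ℕ) (a : ℕ → ℝ),
        C * (∑ k ∈ Finset.range m, |a k| ^ q) ^ (1 / q)
          ≤ Nrm (fun t => ∑ k ∈ Finset.range m, a k * f (φ k) t))
    -- `f` is a step function in `X`:
    (m : ℕ) (u : ℕ → ℝ) (lam : ℕ → ℝ) (hu0 : u 0 = 0)
    (humono : ∀ i < m, u i < u (i + 1))
    (f : ℝ → ℝ)
    (hf : f = fun t => ∑ i ∈ Finset.range m,
      lam i * Set.indicator (Set.Ico (u i) (u (i + 1))) 1 t)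
    (hMemf : Mem f)
    (s : ℝ) (hs : 1 ≤ s) :
    Mem (fun t => f (t / s)) ∧
      2 ^ (-(1 / q)) * C * s ^ (1 / q) * Nrm f ≤ Nrm (fun t => f (t / s)) := by
  obtain rfl : f = stepFunction (range m) u (fun i => u (i + 1)) lam := hf
  set F := stepFunction (range m) u (fun i => u (i + 1)) lam
  have hu : MonotoneOn u (Set.Iic m) := monotoneOn_of_le_succ Set.ordConnected_Iic
    fun i _ _ hi => (humono i (Order.succ_le_iff.mp hi)).le
  have hL : 0 ≤ u m :=
    hu0 ▸ hu (Set.mem_Iic.mpr (Nat.zero_le m)) (Set.mem_Iic.mpr le_rfl) (Nat.zero_le m)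
  have hsupp : support F ⊆ Set.Ico 0 (u m) := hu0 ▸ support_stepFunction_subset_Ico hu lam
  have htrans (j : ℕ) : Mem (fun t => F (t - j * u m)) ∧ Nrm (fun t => F (t - j * u m)) = Nrm F :=
    mem_translate hri hMemf measurable_stepFunction (hsupp.trans Set.Ico_subset_Ici_self)
      (by positivity)
  have hdil (n : ℕ) (hn : 0 < n) {ψ : ℕ → ℕ} (hψ : Injective ψ) :
      Mem (dilation n F) ∧ Nrm (dilation n F) = Nrm fun t => ∑ k ∈ range n, F (t - ψ k * u m) :=
    mem_dilation_nat hri measurable_stepFunction hL hsupp hψ hn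
      (mem_sum hMzero hMadd fun k _ => (htrans (ψ k)).1)
  have hsn : 0 < ⌊s⌋₊ := Nat.floor_pos.mpr hs
  have hDs : Mem (dilation s F) ∧ Nrm (dilation s F) ≤ Nrm (dilation (⌊s⌋₊ + 1 : ℕ) F) :=
    dilation_stepFunction_mono hri hideal hu hu0.ge (by positivity)
      (by exact_mod_cast (Nat.lt_floor_add_one s).le) (hdil (⌊s⌋₊ + 1) (by omega) injective_id).1
  refine ⟨hDs.1, ?_⟩
  rcases (hNnonneg F).eq_or_lt with h0 | hpos
  · rw [← h0, mul_zero]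
    exact hNnonneg _
  obtain ⟨φ, hφ, hlow⟩ := exists_strictMono_lower_estimate hMzero hMadd hMsmul hNhom hUDT hpos
    (fun j => (htrans j).1) (fun j => (htrans j).2) (pairwise_disjoint_support_translate hsupp)
  calc 2 ^ (-(1 / q)) * C * s ^ (1 / q) * Nrm F
      = C * (2 ^ (-(1 / q)) * s ^ (1 / q)) * Nrm F := by ring
    _ ≤ C * (⌊s⌋₊ : ℝ) ^ (1 / q) * Nrm F := by
      gcongr
      exact two_rpow_neg_mul_rpow_le_floor_rpow hs (by positivity)
    _ ≤ Nrm fun t => ∑ k ∈ range ⌊s⌋₊, F (t - φ k * u m) := hlow ⌊s⌋₊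
    _ = Nrm (dilation ⌊s⌋₊ F) := (hdil ⌊s⌋₊ hsn hφ.injective).2.symm
    _ ≤ Nrm (dilation s F) := (dilation_stepFunction_mono hri hideal hu hu0.ge
      (by exact_mod_cast hsn) (Nat.floor_le (by positivity)) hDs.1).2

/-- Proposition 3(2), intermediate claim: in a rearrangement invariant function space
`(Mem, Nrm)` on `[0,∞)` (a linear subspace of measurable functions whose norm is an ideal norm
depending only on the distribution) with the `UDT_q`-property with constant `C`, every step
function `f` satisfies `‖D_s f‖ ≥ 2^{-1/q} C s^{1/q} ‖f‖` for all `s ≥ 1`, where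
`(D_s f)(t) = f(t/s)`. -/
theorem statement17
    (Mem : (ℝ → ℝ) → Prop) (Nrm : (ℝ → ℝ) → ℝ)
    -- `X` is a linear subspace:
    (hMzero : Mem 0)
    (hMadd : ∀ f g : ℝ → ℝ, Mem f → Mem g → Mem (f + g))
    (hMsmul : ∀ (c : ℝ) (f : ℝ → ℝ), Mem f → Mem (c • f))
    -- `Nrm` is a norm on it:
    (hNnonneg : ∀ f : ℝ → ℝ, 0 ≤ Nrm f)
    (hNtri : ∀ f g : ℝ → ℝ, Mem f → Mem g → Nrm (f + g) ≤ Nrm f + Nrm g)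
    (hNhom : ∀ (c : ℝ) (f : ℝ → ℝ), Mem f → Nrm (c • f) = |c| * Nrm f)
    -- (i) the norm is an ideal (lattice) norm:
    (hideal : ∀ f g : ℝ → ℝ, Measurable f → Mem g → (∀ᵐ t ∂muHalfLine, |f t| ≤ |g t|) →
      Mem f ∧ Nrm f ≤ Nrm g)
    -- (ii) the norm is rearrangement invariant:
    (hri : ∀ f g : ℝ → ℝ, Mem f → Measurable g →
      (∀ s : ℝ, 0 < s →
        muHalfLine {t | s < |f t|} = muHalfLine {t | s < |g t|}) →
      Mem g ∧ Nrm g = Nrm f)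
    (q C : ℝ) (hq : 1 < q) (hC : 0 < C)
    -- the `UDT_q`-property with constant `C`:
    (hUDT : ∀ f : ℕ → ℝ → ℝ, (∀ n, Mem (f n)) → (∀ n, Nrm (f n) = 1) →
      (∀ i j, i ≠ j → ∀ᵐ t ∂muHalfLine, f i t * f j t = 0) →
      ∃ φ : ℕ → ℕ, StrictMono φ ∧ ∀ (m : ℕ) (a : ℕ → ℝ),
        C * (∑ k ∈ Finset.range m, |a k| ^ q) ^ (1 / q)
          ≤ Nrm (fun t => ∑ k ∈ Finset.range m, a k * f (φ k) t))
    -- `f` is a step function in `X`: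
    (m : ℕ) (u : ℕ → ℝ) (lam : ℕ → ℝ) (hu0 : u 0 = 0)
    (humono : ∀ i < m, u i < u (i + 1))
    (f : ℝ → ℝ)
    (hf : f = fun t => ∑ i ∈ Finset.range m,
      lam i * Set.indicator (Set.Ico (u i) (u (i + 1))) 1 t)
    (hMemf : Mem f)
    (s : ℝ) (hs : 1 ≤ s) :
    Mem (fun t => f (t / s)) ∧
      2 ^ (-(1 / q)) * C * s ^ (1 / q) * Nrm f ≤ Nrm (fun t => f (t / s)) :=
  statement17_general Mem Nrm hMzero hMadd hMsmul hNnonneg hNhom hideal hri q C hq hC hUDT m u lam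
    hu0 humono f hf hMemf s hs
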